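/- arXiv:1001.3927 — 3 statements merged into one kernel-verified Lean document; each statement's English description precedes it below -/
import Mathlib

section
/- Let (A, H, D) be a spectral triple and P := |D|. If T is an H_P^∞-bounded operator such that T ∈ ⋂_{n∈ℕ} Dom(δ'ⁿ), where δ'(T) := [|D|, T] acting on H_P^∞, then the bounded closure T̄ of T belongs to ⋂_{n∈ℕ} Dom(δⁿ), where δ(S) is the closure of [|D|, S] for bounded S preserving Dom(D), and δ(T̄) equals the closure of δ'(T). -/
noncomputable section

variable {H : Type*} [NormedAddCommGroup H] [InnerProductSpace ℂ H] [CompleteSpace H]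

open Classical in
/-- Application of a partially defined operator, extended by `0` outside its domain. -/
def papp (P : H →ₗ.[ℂ] H) (x : H) : H := if h : x ∈ P.domain then P ⟨x, h⟩ else 0

/-- The domain of the `k`-th power of a partially defined operator `P`. -/
def pdom (P : H →ₗ.[ℂ] H) (k : ℕ) : Set H := {x | ∀ j < k, (papp P)^[j] x ∈ P.domain}

/-- The smooth domain `H_P^∞ := ⋂_{k≥1} Dom(P^k)`. -/
def smoothDom (P : H →ₗ.[ℂ] H) : Set H := ⋂ k ∈ {k : ℕ | 1 ≤ k}, pdom P k

/-- `H_P^∞`-bounded operators: maps of `H_P^∞` into itself, linear and norm-bounded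
on `H_P^∞`. -/
def IsSmoothBounded (P : H →ₗ.[ℂ] H) (t : H → H) : Prop :=
  (∀ x ∈ smoothDom P, t x ∈ smoothDom P) ∧
  (∀ x ∈ smoothDom P, ∀ y ∈ smoothDom P, t (x + y) = t x + t y) ∧
  (∀ (c : ℂ), ∀ x ∈ smoothDom P, t (c • x) = c • t x) ∧
  (∃ C : ℝ, ∀ x ∈ smoothDom P, ‖t x‖ ≤ C * ‖x‖)

/-- The commutator `δ'(S) = [|D|, S]` on the smooth domain (with junk values outside). -/
def commP (P : H →ₗ.[ℂ] H) (S : H → H) : H → H :=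
  fun x => papp P (S x) - S (papp P x)

/-!
Let `A = (1 + P²)⁻¹`: a positive contraction commuting with `P`, with dense range inside
`Dom P²`. For `g(x) = exp(-1/x)` the contractions `Eₙ = g((n + 1) A)` commute with `P` and tend
strongly to `1`, since `‖Eₙ A - A‖ ≤ 1/(n + 1)`. As `g` vanishes to infinite order at `0`,
`Eₙ = ((n + 1) A)ᵏ hₖ((n + 1) A)` for every `k`, so `Eₙ` maps `H` into `H_P^∞`. Hence `H_P^∞`
is dense and every `δ'ⁿ(T)` extends to a bounded `Tₙ`. For `x ∈ Dom P` the vectors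
`Eₘ x ∈ H_P^∞` tend to `x` and `P Eₘ x = Eₘ P x` tend to `P x`, so the identity
`P Tₙ Eₘ x = Tₙ₊₁ Eₘ x + Tₙ P Eₘ x` passes to the limit because `P` is closed:
`Tₙ x ∈ Dom P` and `[P, Tₙ] x = Tₙ₊₁ x`.
-/

open Filter Topology
open scoped InnerProductSpace

section Domains

omit [CompleteSpace H]

variable {P : H →ₗ.[ℂ] H} {x y : H}

theorem papp_coe (x : P.domain) : papp P x = P x := dif_pos x.2

theorem mem_graph_iff_papp {p : H × H} : p ∈ P.graph ↔ p.1 ∈ P.domain ∧ papp P p.1 = p.2 := by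
  rw [LinearPMap.mem_graph_iff]
  constructor
  · rintro ⟨x, hx, hPx⟩
    exact ⟨hx ▸ x.2, by rw [← hPx, ← papp_coe, hx]⟩
  · rintro ⟨hx, hPx⟩
    exact ⟨⟨p.1, hx⟩, rfl, hPx ▸ (papp_coe ⟨p.1, hx⟩).symm⟩

theorem papp_mem_graph (hx : x ∈ P.domain) : (x, papp P x) ∈ P.graph :=
  mem_graph_iff_papp.2 ⟨hx, rfl⟩

theorem papp_zero : papp P 0 = 0 :=
  (mem_graph_iff_papp.1 P.graph.zero_mem).2

theorem papp_add (hx : x ∈ P.domain) (hy : y ∈ P.domain) :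
    papp P (x + y) = papp P x + papp P y :=
  (mem_graph_iff_papp.1 (add_mem (papp_mem_graph hx) (papp_mem_graph hy))).2

theorem papp_sub (hx : x ∈ P.domain) (hy : y ∈ P.domain) :
    papp P (x - y) = papp P x - papp P y :=
  (mem_graph_iff_papp.1 (sub_mem (papp_mem_graph hx) (papp_mem_graph hy))).2

theorem papp_smul (c : ℂ) (hx : x ∈ P.domain) : papp P (c • x) = c • papp P x :=
  (mem_graph_iff_papp.1 (P.graph.smul_mem c (papp_mem_graph hx))).2

theorem pdom_zero : pdom P 0 = Set.univ :=
  Set.eq_univ_of_forall fun _ _ h => absurd h (Nat.not_lt_zero _)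

theorem mem_pdom_succ {k : ℕ} : x ∈ pdom P (k + 1) ↔ x ∈ P.domain ∧ papp P x ∈ pdom P k := by
  simp only [pdom, Set.mem_ofPred_eq, Nat.forall_lt_succ_left, Function.iterate_zero_apply,
    Function.iterate_succ_apply]

theorem mem_pdom_one : x ∈ pdom P 1 ↔ x ∈ P.domain := by
  simp [mem_pdom_succ, pdom_zero]

theorem mem_pdom_two : x ∈ pdom P 2 ↔ x ∈ P.domain ∧ papp P x ∈ P.domain := by
  rw [mem_pdom_succ, mem_pdom_one]

theorem pdom_antitone : Antitone (pdom P) :=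
  fun _ _ hkm _ hx j hj => hx j (lt_of_lt_of_le hj hkm)

variable (P) in
/-- `Dom(P^(k+1)) = {x ∈ Dom P | P x ∈ Dom(P^k)}`. -/
def pdomSubmodule : ℕ → Submodule ℂ H
  | 0 => ⊤
  | k + 1 => ((pdomSubmodule k).comap P.toFun).map P.domain.subtype

theorem mem_pdomSubmodule {k : ℕ} : x ∈ pdomSubmodule P k ↔ x ∈ pdom P k := by
  induction k generalizing x with
  | zero => simp [pdomSubmodule, pdom_zero]
  | succ k ih =>
    rw [mem_pdom_succ, ← SetLike.mem_coe, ← ih]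
    constructor
    · rintro ⟨x, hx, rfl⟩
      exact ⟨x.2, by rw [Submodule.subtype_apply, papp_coe]; exact hx⟩
    · rintro ⟨hx, hPx⟩
      exact ⟨⟨x, hx⟩, show P ⟨x, hx⟩ ∈ pdomSubmodule P k from papp_coe ⟨x, hx⟩ ▸ hPx, rfl⟩

theorem mem_smoothDom_iff : x ∈ smoothDom P ↔ ∀ k, x ∈ pdom P k := by
  simp only [smoothDom, Set.mem_iInter, Set.mem_ofPred_eq]
  exact ⟨fun h k => pdom_antitone k.le_succ (h (k + 1) k.succ_pos), fun h k _ => h k⟩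

variable (P) in
def smoothSubmodule : Submodule ℂ H := ⨅ k, pdomSubmodule P k

theorem mem_smoothSubmodule : x ∈ smoothSubmodule P ↔ x ∈ smoothDom P := by
  simp [smoothSubmodule, mem_pdomSubmodule, mem_smoothDom_iff]

theorem mem_domain_of_mem_smoothDom (hx : x ∈ smoothDom P) : x ∈ P.domain :=
  mem_pdom_one.1 (mem_smoothDom_iff.1 hx 1)

theorem papp_mem_smoothDom (hx : x ∈ smoothDom P) : papp P x ∈ smoothDom P :=
  mem_smoothDom_iff.2 fun k => (mem_pdom_succ.1 (mem_smoothDom_iff.1 hx (k + 1))).2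

namespace LinearPMap

variable {B : H →L[ℂ] H}

variable (P) in
/-- The bounded operators `B` with `B P ⊆ P B`. -/
def commutant : Subalgebra ℂ (H →L[ℂ] H) where
  carrier := {B | ∀ x ∈ P.domain, (B x, B (papp P x)) ∈ P.graph}
  mul_mem' {B C} hB hC x hx := by
    obtain ⟨hCx, hPCx⟩ := mem_graph_iff_papp.1 (hC x hx)
    simpa [hPCx] using hB _ hCx
  add_mem' hB hC x hx := add_mem (hB x hx) (hC x hx)
  algebraMap_mem' c x hx := by
    simpa [Algebra.algebraMap_eq_smul_one] using P.graph.smul_mem c (papp_mem_graph hx)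

theorem mem_commutant_iff :
    B ∈ P.commutant ↔ ∀ x ∈ P.domain, B x ∈ P.domain ∧ papp P (B x) = B (papp P x) :=
  forall₂_congr fun _ _ => mem_graph_iff_papp

theorem isClosed_commutant (hP : P.IsClosed) :
    _root_.IsClosed (P.commutant : Set (H →L[ℂ] H)) := by
  have : (P.commutant : Set (H →L[ℂ] H)) =
      ⋂ x ∈ P.domain, (fun B : H →L[ℂ] H => (B x, B (papp P x))) ⁻¹' P.graph := by
    ext B
    simp [commutant]
  rw [this]
  exact isClosed_biInter fun x _ => hP.preimage (by fun_prop)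

theorem pow_apply_mem_pdom (hB : B ∈ P.commutant) (hBdom : ∀ x, B x ∈ P.domain) (k : ℕ)
    (x : H) : (B ^ k) x ∈ pdom P k := by
  induction k generalizing x with
  | zero => simp [pdom_zero]
  | succ k ih =>
    obtain ⟨hBkx, hPBkx⟩ := mem_commutant_iff.1 (pow_mem hB k) (B x) (hBdom x)
    rw [pow_succ, mul_apply_eq_comp, mem_pdom_succ, hPBkx]
    exact ⟨hBkx, ih _⟩

variable (P) in
def oneAddSq : pdomSubmodule P 2 →ₗ[ℂ] H where
  toFun c := c + papp P (papp P c)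
  map_add' c d := by
    obtain ⟨hc, hPc⟩ := mem_pdom_two.1 (mem_pdomSubmodule.1 c.2)
    obtain ⟨hd, hPd⟩ := mem_pdom_two.1 (mem_pdomSubmodule.1 d.2)
    simp only [Submodule.coe_add, papp_add hc hd, papp_add hPc hPd]
    abel
  map_smul' a c := by
    obtain ⟨hc, hPc⟩ := mem_pdom_two.1 (mem_pdomSubmodule.1 c.2)
    simp [papp_smul a hc, papp_smul a hPc]

end LinearPMap

end Domains

namespace expNegInvGlue

theorem le_one (x : ℝ) : expNegInvGlue x ≤ 1 := by
  unfold expNegInvGlue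
  split_ifs with hx
  · exact zero_le_one
  · exact Real.exp_le_one_iff.2 (neg_nonpos.2 (inv_nonneg.2 (le_of_not_ge hx)))

theorem abs_sub_one_mul_le {x : ℝ} (hx : 0 ≤ x) : |(expNegInvGlue x - 1) * x| ≤ 1 := by
  rcases hx.eq_or_lt with rfl | hx
  · simp
  have hexp : 1 - x⁻¹ ≤ expNegInvGlue x := by
    rw [expNegInvGlue, if_neg hx.not_ge]
    linarith [Real.add_one_le_exp (-x⁻¹)]
  rw [abs_of_nonpos (mul_nonpos_of_nonpos_of_nonneg (by linarith [le_one x]) hx.le)]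
  calc -((expNegInvGlue x - 1) * x) ≤ x⁻¹ * x := by nlinarith
    _ = 1 := inv_mul_cancel₀ hx.ne'

theorem exists_continuous_eq_pow_mul (k : ℕ) :
    ∃ h : ℝ → ℝ, Continuous h ∧ ∀ x, expNegInvGlue x = x ^ k * h x := by
  refine ⟨_, continuous_polynomial_eval_inv_mul (Polynomial.X ^ k), fun x => ?_⟩
  rcases eq_or_ne x 0 with rfl | hx
  · simp [expNegInvGlue.zero]
  · rw [Polynomial.eval_pow, Polynomial.eval_X, ← mul_assoc, ← mul_pow, mul_inv_cancel₀ hx,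
      one_pow, one_mul]

variable {A : Type*} [CStarAlgebra A]

theorem norm_cfc_le_one (a : A) : ‖cfc expNegInvGlue a‖ ≤ 1 :=
  norm_cfc_le zero_le_one fun x _ => by
    rw [Real.norm_eq_abs, abs_of_nonneg (nonneg x)]
    exact le_one x

theorem norm_cfc_mul_sub_le [PartialOrder A] [StarOrderedRing A] {a : A} (ha : 0 ≤ a) :
    ‖cfc expNegInvGlue a * a - a‖ ≤ 1 := by
  have hc : Continuous expNegInvGlue := (expNegInvGlue.contDiff (n := 0)).continuous
  have h : cfc (fun x => (expNegInvGlue x - 1) * x) a = cfc expNegInvGlue a * a - a := by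
    rw [cfc_mul (fun x => expNegInvGlue x - 1) (fun x => x) a
        (hc.sub continuous_const).continuousOn,
      cfc_sub expNegInvGlue (fun _ => 1) a hc.continuousOn, cfc_id' ℝ a, cfc_const_one ℝ a,
      sub_mul, one_mul]
  rw [← h]
  exact norm_cfc_le zero_le_one fun x hx => abs_sub_one_mul_le (spectrum_nonneg_of_nonneg ha hx)

end expNegInvGlue

namespace LinearPMap

variable {P : H →ₗ.[ℂ] H} {B : H →L[ℂ] H}

theorem cfc_mem_commutant (hP : P.IsClosed) (hB : B ∈ P.commutant) (hB' : IsSelfAdjoint B)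
    (f : ℝ → ℝ) : cfc f B ∈ P.commutant := by
  have hf := cfc_mem_elemental f B
  generalize cfc f B = A at hf ⊢
  induction hf using StarAlgebra.elemental.induction_on with
  | self => exact hB
  | star_self => rwa [hB'.star_eq]
  | algebraMap r => exact (P.commutant.restrictScalars ℝ).algebraMap_mem r
  | add u _ v _ hu hv => exact add_mem hu hv
  | mul u _ v _ hu hv => exact mul_mem hu hv
  | closure s _ hs v hv => exact closure_minimal hs (isClosed_commutant hP) hv

theorem cfc_expNegInvGlue_apply_mem_smoothDom (hB : B ∈ P.commutant) (hB' : IsSelfAdjoint B)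
    (hBdom : ∀ x, B x ∈ P.domain) (x : H) : cfc expNegInvGlue B x ∈ smoothDom P := by
  refine mem_smoothDom_iff.2 fun k => ?_
  obtain ⟨h, hh, hglue⟩ := expNegInvGlue.exists_continuous_eq_pow_mul k
  have : cfc expNegInvGlue B = B ^ k * cfc h B := by
    rw [funext hglue, cfc_mul (fun y => y ^ k) h B, cfc_pow_id B k hB']
  rw [this, mul_apply_eq_comp]
  exact pow_apply_mem_pdom hB hBdom k _

end LinearPMap

namespace IsSelfAdjoint

variable {P : H →ₗ.[ℂ] H} {x y c : H}

theorem mem_graph_iff (hP : IsSelfAdjoint P) {p : H × H} :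
    p ∈ P.graph ↔ ∀ v ∈ P.domain, ⟪papp P v, p.1⟫_ℂ = ⟪v, p.2⟫_ℂ := by
  have h := LinearPMap.adjoint_graph_eq_graph_adjoint hP.dense_domain
  rw [LinearPMap.isSelfAdjoint_def.mp hP] at h
  rw [h, Submodule.mem_adjoint_iff]
  simp only [mem_graph_iff_papp, sub_eq_zero, and_imp]
  exact ⟨fun h v hv => h v _ hv rfl, fun h a b ha hb => hb ▸ h a ha⟩

theorem inner_papp_left (hP : IsSelfAdjoint P) (hx : x ∈ P.domain) (hy : y ∈ P.domain) :
    ⟪papp P x, y⟫_ℂ = ⟪x, papp P y⟫_ℂ :=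
  hP.mem_graph_iff.1 (papp_mem_graph hy) x hx

theorem inner_add_papp_papp (hP : IsSelfAdjoint P) (hc : c ∈ pdom P 2) :
    ⟪c, c + papp P (papp P c)⟫_ℂ = ((‖c‖ ^ 2 + ‖papp P c‖ ^ 2 : ℝ) : ℂ) := by
  obtain ⟨hc, hPc⟩ := mem_pdom_two.1 hc
  rw [inner_add_right, ← hP.inner_papp_left hc hPc, inner_self_eq_norm_sq_to_K,
    inner_self_eq_norm_sq_to_K]
  norm_cast

theorem norm_le_norm_add_papp_papp (hP : IsSelfAdjoint P) (hc : c ∈ pdom P 2) :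
    ‖c‖ ≤ ‖c + papp P (papp P c)‖ := by
  have h := congrArg Complex.re (hP.inner_add_papp_papp hc)
  rw [Complex.ofReal_re] at h
  have hle : ‖c‖ ^ 2 ≤ ‖c‖ * ‖c + papp P (papp P c)‖ :=
    calc ‖c‖ ^ 2 ≤ (⟪c, c + papp P (papp P c)⟫_ℂ).re := by
          rw [h]; nlinarith [sq_nonneg ‖papp P c‖]
      _ ≤ ‖c‖ * ‖c + papp P (papp P c)‖ := (Complex.re_le_norm _).trans (norm_inner_le_norm _ _)
  nlinarith [norm_nonneg c, norm_nonneg (c + papp P (papp P c))]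

/-- Von Neumann's argument: split `(0, y)` along the graph of `P` and its orthogonal complement,
which for selfadjoint `P` is `{(-P w, w)}`. -/
theorem exists_mem_pdom_two_add_papp_papp_eq (hP : IsSelfAdjoint P) (y : H) :
    ∃ c ∈ pdom P 2, c + papp P (papp P c) = y := by
  let K : Submodule ℂ (WithLp 2 (H × H)) :=
    P.graph.comap (WithLp.linearEquiv 2 ℂ (H × H)).toLinearMap
  have : CompleteSpace K :=
    (hP.isClosed.preimage (WithLp.prod_continuous_ofLp 2 H H)).completeSpace_coe
  obtain ⟨g, hg, w, hw, hgw⟩ := K.exists_add_mem_mem_orthogonal (WithLp.toLp 2 (0, y))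
  obtain ⟨hg₁, hg₂⟩ : g.fst ∈ P.domain ∧ papp P g.fst = g.snd := mem_graph_iff_papp.1 hg
  have hw' : (w.snd, -w.fst) ∈ P.graph := hP.mem_graph_iff.2 fun v hv => by
    have h := (K.mem_orthogonal w).1 hw (WithLp.toLp 2 (v, papp P v)) (papp_mem_graph hv)
    rw [WithLp.prod_inner_apply] at h
    change ⟪v, w.fst⟫_ℂ + ⟪papp P v, w.snd⟫_ℂ = 0 at h
    rw [inner_neg_right]
    linear_combination h
  obtain ⟨hc, hPc⟩ : w.snd ∈ P.domain ∧ papp P w.snd = -w.fst := mem_graph_iff_papp.1 hw'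
  have h₁ : (0 : H) = g.fst + w.fst := congrArg WithLp.fst hgw
  have h₂ : y = g.snd + w.snd := congrArg WithLp.snd hgw
  have hPc' : papp P w.snd = g.fst := hPc.trans (eq_neg_of_add_eq_zero_left h₁.symm).symm
  refine ⟨w.snd, mem_pdom_two.2 ⟨hc, hPc' ▸ hg₁⟩, ?_⟩
  rw [hPc', hg₂, h₂, add_comm]

theorem bijective_oneAddSq (hP : IsSelfAdjoint P) : Function.Bijective P.oneAddSq := by
  refine ⟨(injective_iff_map_eq_zero _).2 fun c hc => ?_, fun y => ?_⟩
  · have h := hP.norm_le_norm_add_papp_papp (mem_pdomSubmodule.1 c.2)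
    rw [show (c : H) + papp P (papp P c) = 0 from hc, norm_zero, norm_le_zero_iff] at h
    exact Subtype.ext h
  · obtain ⟨c, hc, rfl⟩ := hP.exists_mem_pdom_two_add_papp_papp_eq y
    exact ⟨⟨c, mem_pdomSubmodule.2 hc⟩, rfl⟩

def oneAddSqEquiv (hP : IsSelfAdjoint P) : pdomSubmodule P 2 ≃ₗ[ℂ] H :=
  LinearEquiv.ofBijective _ hP.bijective_oneAddSq

def oneAddSqInv (hP : IsSelfAdjoint P) : H →L[ℂ] H :=
  LinearMap.mkContinuous ((pdomSubmodule P 2).subtype ∘ₗ hP.oneAddSqEquiv.symm) 1 fun y =>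
    calc ‖(hP.oneAddSqEquiv.symm y : H)‖
        ≤ ‖P.oneAddSq (hP.oneAddSqEquiv.symm y)‖ :=
          hP.norm_le_norm_add_papp_papp (mem_pdomSubmodule.1 (hP.oneAddSqEquiv.symm y).2)
      _ = 1 * ‖y‖ := by rw [one_mul]; exact congrArg norm (hP.oneAddSqEquiv.apply_symm_apply y)

theorem oneAddSqInv_apply_mem (hP : IsSelfAdjoint P) (y : H) : hP.oneAddSqInv y ∈ pdom P 2 :=
  mem_pdomSubmodule.1 (hP.oneAddSqEquiv.symm y).2

theorem oneAddSqInv_apply_add (hP : IsSelfAdjoint P) (y : H) :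
    hP.oneAddSqInv y + papp P (papp P (hP.oneAddSqInv y)) = y :=
  hP.oneAddSqEquiv.apply_symm_apply y

theorem oneAddSqInv_add_papp_papp (hP : IsSelfAdjoint P) (hc : c ∈ pdom P 2) :
    hP.oneAddSqInv (c + papp P (papp P c)) = c :=
  congrArg Subtype.val (hP.oneAddSqEquiv.symm_apply_apply ⟨c, mem_pdomSubmodule.2 hc⟩)

theorem oneAddSqInv_mem_commutant (hP : IsSelfAdjoint P) : hP.oneAddSqInv ∈ P.commutant := by
  refine LinearPMap.mem_commutant_iff.2 fun y hy => ?_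
  set c := hP.oneAddSqInv y
  obtain ⟨hc, hPc⟩ := mem_pdom_two.1 (hP.oneAddSqInv_apply_mem y)
  have hPPc : papp P (papp P c) = y - c := eq_sub_of_add_eq' (hP.oneAddSqInv_apply_add y)
  have hPc2 : papp P c ∈ pdom P 2 := mem_pdom_two.2 ⟨hPc, hPPc ▸ sub_mem hy hc⟩
  refine ⟨hc, (hP.oneAddSqInv_add_papp_papp hPc2).symm.trans (congrArg hP.oneAddSqInv ?_)⟩
  rw [hPPc, papp_sub hy hc]
  abel

theorem oneAddSqInv_nonneg (hP : IsSelfAdjoint P) : 0 ≤ hP.oneAddSqInv := by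
  rw [ContinuousLinearMap.nonneg_iff_isPositive, ContinuousLinearMap.isPositive_iff_complex]
  intro y
  have h := hP.inner_add_papp_papp (hP.oneAddSqInv_apply_mem y)
  rw [hP.oneAddSqInv_apply_add] at h
  rw [h, RCLike.re_to_complex, Complex.ofReal_re]
  exact ⟨rfl, by positivity⟩

theorem denseRange_oneAddSqInv (hP : IsSelfAdjoint P) : DenseRange hP.oneAddSqInv := by
  have hker : LinearMap.ker (hP.oneAddSqInv : H →ₗ[ℂ] H) = ⊥ :=
    LinearMap.ker_eq_bot'.2 fun y (hy : hP.oneAddSqInv y = 0) => by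
      rw [← hP.oneAddSqInv_apply_add y, hy, papp_zero, papp_zero, add_zero]
  have hsymm := ((ContinuousLinearMap.nonneg_iff_isPositive _).1 hP.oneAddSqInv_nonneg).isSymmetric
  rw [DenseRange, ← ContinuousLinearMap.coe_coe, ← LinearMap.coe_range]
  exact Submodule.dense_iff_topologicalClosure_eq_top.2
    (Submodule.topologicalClosure_eq_top_iff.2 (hsymm.orthogonal_range.trans hker))

/-- `exp(-(1 + P²)/(n + 1))`. -/
def smoothing (hP : IsSelfAdjoint P) (n : ℕ) : H →L[ℂ] H :=
  cfc expNegInvGlue (((n : ℝ) + 1) • hP.oneAddSqInv)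

theorem smul_oneAddSqInv_mem_commutant (hP : IsSelfAdjoint P) (r : ℝ) :
    r • hP.oneAddSqInv ∈ P.commutant :=
  (P.commutant.restrictScalars ℝ).smul_mem hP.oneAddSqInv_mem_commutant r

theorem smoothing_mem_commutant (hP : IsSelfAdjoint P) (n : ℕ) :
    hP.smoothing n ∈ P.commutant :=
  LinearPMap.cfc_mem_commutant hP.isClosed (hP.smul_oneAddSqInv_mem_commutant _)
    (smul_nonneg (by positivity) hP.oneAddSqInv_nonneg).isSelfAdjoint _

theorem smoothing_apply_mem_smoothDom (hP : IsSelfAdjoint P) (n : ℕ) (x : H) :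
    hP.smoothing n x ∈ smoothDom P :=
  LinearPMap.cfc_expNegInvGlue_apply_mem_smoothDom (hP.smul_oneAddSqInv_mem_commutant _)
    (smul_nonneg (by positivity) hP.oneAddSqInv_nonneg).isSelfAdjoint
    (fun y => P.domain.smul_of_tower_mem _ (mem_pdom_two.1 (hP.oneAddSqInv_apply_mem y)).1) x

theorem norm_smoothing_le_one (hP : IsSelfAdjoint P) (n : ℕ) : ‖hP.smoothing n‖ ≤ 1 :=
  expNegInvGlue.norm_cfc_le_one _

theorem norm_smoothing_mul_sub_le (hP : IsSelfAdjoint P) (n : ℕ) :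
    ‖hP.smoothing n * hP.oneAddSqInv - hP.oneAddSqInv‖ ≤ 1 / ((n : ℝ) + 1) := by
  have h := expNegInvGlue.norm_cfc_mul_sub_le
    (smul_nonneg (by positivity : (0 : ℝ) ≤ (n : ℝ) + 1) hP.oneAddSqInv_nonneg)
  rw [mul_smul_comm, ← smul_sub, norm_smul, Real.norm_of_nonneg (by positivity)] at h
  rwa [le_div_iff₀' (by positivity)]

theorem tendsto_smoothing_apply (hP : IsSelfAdjoint P) (v : H) :
    Tendsto (fun n => hP.smoothing n v) atTop (𝓝 v) := by
  have hequi : Equicontinuous fun n => ⇑(hP.smoothing n) :=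
    ((NormedSpace.equicontinuous_TFAE hP.smoothing).out 5 1).1
      (⟨1, hP.norm_smoothing_le_one⟩ : ∃ C, ∀ n, ‖hP.smoothing n‖ ≤ C)
  refine closure_minimal ?_ (hequi.isClosed_setOfPred_tendsto continuous_id)
    (hP.denseRange_oneAddSqInv v)
  rintro _ ⟨w, rfl⟩
  have h : Tendsto (fun n => hP.smoothing n * hP.oneAddSqInv) atTop (𝓝 hP.oneAddSqInv) :=
    tendsto_iff_norm_sub_tendsto_zero.2 (squeeze_zero (fun _ => norm_nonneg _)
      hP.norm_smoothing_mul_sub_le tendsto_one_div_add_atTop_nhds_zero_nat)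
  exact ((ContinuousLinearMap.apply ℂ H w).continuous.tendsto _).comp h

theorem dense_smoothDom (hP : IsSelfAdjoint P) : Dense (smoothDom P) := fun v =>
  mem_closure_of_tendsto (hP.tendsto_smoothing_apply v)
    (Eventually.of_forall fun n => hP.smoothing_apply_mem_smoothDom n v)

theorem commutator_eq_of_smoothDom (hP : IsSelfAdjoint P) {S S' : H →L[ℂ] H}
    (h : ∀ x ∈ smoothDom P, S x ∈ P.domain ∧ S' x = papp P (S x) - S (papp P x))
    (hx : x ∈ P.domain) : S x ∈ P.domain ∧ S' x = papp P (S x) - S (papp P x) := by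
  set u := fun n => hP.smoothing n x
  have hu : ∀ n, papp P (u n) = hP.smoothing n (papp P x) := fun n =>
    (LinearPMap.mem_commutant_iff.1 (hP.smoothing_mem_commutant n) x hx).2
  have hgraph : ∀ n, (S (u n), S' (u n) + S (hP.smoothing n (papp P x))) ∈ P.graph := fun n => by
    obtain ⟨hSu, hS'u⟩ := h (u n) (hP.smoothing_apply_mem_smoothDom n x)
    rw [← hu, hS'u, sub_add_cancel]
    exact papp_mem_graph hSu
  have hlim : Tendsto (fun n => (S (u n), S' (u n) + S (hP.smoothing n (papp P x)))) atTop
      (𝓝 (S x, S' x + S (papp P x))) :=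
    ((S.continuous.tendsto x).comp (hP.tendsto_smoothing_apply x)).prodMk_nhds
      (((S'.continuous.tendsto x).comp (hP.tendsto_smoothing_apply x)).add
        ((S.continuous.tendsto _).comp (hP.tendsto_smoothing_apply (papp P x))))
  obtain ⟨hSx, hPSx⟩ := mem_graph_iff_papp.1
    (hP.isClosed.mem_of_tendsto hlim (Eventually.of_forall hgraph))
  exact ⟨hSx, eq_sub_of_add_eq hPSx.symm⟩

end IsSelfAdjoint

namespace IsSmoothBounded

variable {P : H →ₗ.[ℂ] H} {t : H → H}

omit [CompleteSpace H] in
theorem exists_norm_le (ht : IsSmoothBounded P t) :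
    ∃ C, ∀ x : smoothSubmodule P, ‖t x‖ ≤ C * ‖(x : H)‖ := by
  obtain ⟨C, hC⟩ := ht.2.2.2
  exact ⟨C, fun x => hC x (mem_smoothSubmodule.1 x.2)⟩

def toLinearMap (ht : IsSmoothBounded P t) : smoothSubmodule P →ₗ[ℂ] H where
  toFun x := t x
  map_add' x y := ht.2.1 x (mem_smoothSubmodule.1 x.2) y (mem_smoothSubmodule.1 y.2)
  map_smul' c x := ht.2.2.1 c x (mem_smoothSubmodule.1 x.2)

def boundedClosure (ht : IsSmoothBounded P t) : H →L[ℂ] H :=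
  ht.toLinearMap.extendOfNorm (smoothSubmodule P).subtype

theorem boundedClosure_apply (hP : IsSelfAdjoint P) (ht : IsSmoothBounded P t) {x : H}
    (hx : x ∈ smoothDom P) : ht.boundedClosure x = t x :=
  LinearMap.extendOfNorm_eq (f := ht.toLinearMap) (e := (smoothSubmodule P).subtype)
    (hP.dense_smoothDom.mono fun _ => mem_smoothSubmodule.2).denseRange_val ht.exists_norm_le
    ⟨x, mem_smoothSubmodule.2 hx⟩

end IsSmoothBounded

theorem bounded_closure_in_dom_delta_general (P : H →ₗ.[ℂ] H) (hP : IsSelfAdjoint P)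
    (t : H → H)
    (hiter : ∀ n : ℕ, IsSmoothBounded P ((commP P)^[n] t)) :
    ∃ Tb : ℕ → (H →L[ℂ] H),
      (∀ x ∈ smoothDom P, Tb 0 x = t x) ∧
      (∀ n : ℕ, ∀ x ∈ pdom P 1, Tb n x ∈ pdom P 1 ∧
        Tb (n + 1) x = papp P (Tb n x) - Tb n (papp P x)) ∧
      (∀ x ∈ smoothDom P, Tb 1 x = papp P (t x) - t (papp P x)) := by
  refine ⟨fun n => (hiter n).boundedClosure, fun x hx => (hiter 0).boundedClosure_apply hP hx,
    fun n x hx => ?_, fun x hx => (hiter 1).boundedClosure_apply hP hx⟩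
  rw [mem_pdom_one] at hx ⊢
  refine hP.commutator_eq_of_smoothDom (fun y hy => ?_) hx
  rw [(hiter n).boundedClosure_apply hP hy, (hiter (n + 1)).boundedClosure_apply hP hy,
    (hiter n).boundedClosure_apply hP (papp_mem_smoothDom hy), Function.iterate_succ_apply']
  exact ⟨mem_domain_of_mem_smoothDom ((hiter n).1 y hy), rfl⟩

/-- Connes' Lemma 13.1: let `P = |D|` (a nonnegative selfadjoint
operator) and let `T` be an `H_P^∞`-bounded operator with all iterated commutators
`δ'ⁿ(T) = [|D|,·]ⁿ(T)` again `H_P^∞`-bounded. Then the bounded closure `T̄` of `T`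
lies in `⋂ₙ Dom δⁿ`: there is a chain `Tb n` of bounded operators with `Tb 0 = T̄`,
each `Tb n` preserving `Dom D` with `δ(Tb n) = Tb (n+1)`, and `δ(T̄)` is the closure
of `δ'(T)`. -/
theorem bounded_closure_in_dom_delta (P : H →ₗ.[ℂ] H) (hP : IsSelfAdjoint P)
    (hPpos : ∀ x : P.domain, 0 ≤ (inner ℂ (P x) (x : H) : ℂ).re)
    (t : H → H) (ht : IsSmoothBounded P t)
    (hiter : ∀ n : ℕ, IsSmoothBounded P ((commP P)^[n] t)) :
    ∃ Tb : ℕ → (H →L[ℂ] H),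
      (∀ x ∈ smoothDom P, Tb 0 x = t x) ∧
      (∀ n : ℕ, ∀ x ∈ pdom P 1, Tb n x ∈ pdom P 1 ∧
        Tb (n + 1) x = papp P (Tb n x) - Tb n (papp P x)) ∧
      (∀ x ∈ smoothDom P, Tb 1 x = papp P (t x) - t (papp P x)) :=
  bounded_closure_in_dom_delta_general P hP t hiter
end
end

section
/- Let E_N be a finite-dimensional complex inner product space, S a selfadjoint idempotent endomorphism of E_N, and 𝔄 an invertible anti-selfadjoint endomorphism (𝔄* = -𝔄). If (1-S)𝔄(1-S) = 0 and S𝔄^{-1}S = 0, then the map Ψ := -(1-S)𝔄 restricted to the range of S is a linear isomorphism from ran(S) onto ran(1-S), with inverse given by -S𝔄^{-1} restricted to ran(1-S). -/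
open scoped InnerProductSpace

/-!
Expanding `1 - S` in the product `(S𝔄⁻¹)((1-S)𝔄) = S𝔄⁻¹𝔄 - (S𝔄⁻¹S)𝔄` shows that it equals `S`;
symmetrically `((1-S)𝔄)(S𝔄⁻¹) = 1 - S`. Since `S` and `1 - S` are idempotent, they act as the
identity on their ranges, so the two maps are mutually inverse between `ran S` and `ran (1-S)`.
-/

theorem mul_mul_one_sub_mul_eq_self {R : Type*} [Ring R] {p a b : R}
    (hba : b * a = 1) (hp : p * b * p = 0) : p * b * ((1 - p) * a) = p :=
  calc p * b * ((1 - p) * a) = p * (b * a) - p * b * p * a := by noncomm_ring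
    _ = p := by rw [hba, hp]; simp

namespace Module.End

variable {R M : Type*} [Ring R] [AddCommGroup M] [Module R M]

theorem mapsTo_neg_mul_range (f g : Module.End R M) (s : Set M) :
    Set.MapsTo ⇑(-(f * g)) s (LinearMap.range f) :=
  fun x _ => ⟨-g x, by simp⟩

theorem neg_apply_neg_apply_of_mul_eq {f g p : Module.End R M} (hfg : f * g = p)
    (hp : IsIdempotentElem p) {x : M} (hx : x ∈ LinearMap.range p) : (-f) ((-g) x) = x := by
  rw [LinearMap.neg_apply, LinearMap.neg_apply, map_neg, neg_neg, ← Module.End.mul_apply, hfg]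
  exact (LinearMap.IsIdempotentElem.mem_range_iff hp).mp hx

end Module.End

theorem psi_isomorphism_general {E : Type*} [NormedAddCommGroup E] [InnerProductSpace ℂ E]
    (S A B : E →ₗ[ℂ] E)
    (hSidem : S * S = S)
    (hAB : A * B = 1) (hBA : B * A = 1)
    (h1 : (1 - S) * A * (1 - S) = 0) (h2 : S * B * S = 0) :
    Set.MapsTo ⇑(-((1 - S) * A)) (LinearMap.range S : Set E) (LinearMap.range (1 - S) : Set E) ∧
    Set.MapsTo ⇑(-(S * B)) (LinearMap.range (1 - S) : Set E) (LinearMap.range S : Set E) ∧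
    (∀ x ∈ LinearMap.range S, (-(S * B)) ((-((1 - S) * A)) x) = x) ∧
    (∀ y ∈ LinearMap.range (1 - S), (-((1 - S) * A)) ((-(S * B)) y) = y) := by
  have hS : IsIdempotentElem S := hSidem
  have hSB : S * B * ((1 - S) * A) = S := mul_mul_one_sub_mul_eq_self hBA h2
  have hSA : (1 - S) * A * (S * B) = 1 - S := by
    simpa using mul_mul_one_sub_mul_eq_self hAB h1
  exact ⟨Module.End.mapsTo_neg_mul_range _ _ _, Module.End.mapsTo_neg_mul_range _ _ _,
    fun _ => Module.End.neg_apply_neg_apply_of_mul_eq hSB hS,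
    fun _ => Module.End.neg_apply_neg_apply_of_mul_eq hSA hS.one_sub⟩

/-- Theorem 4.6(i), finite-dimensional core: if `S` is a selfadjoint idempotent and
`𝔄` an invertible anti-selfadjoint endomorphism with `(1-S)𝔄(1-S) = 0` and
`S𝔄⁻¹S = 0`, then `Ψ := -(1-S)𝔄` restricted to `ran S` is a linear isomorphism
onto `ran (1-S)`, with inverse `-S𝔄⁻¹` restricted to `ran (1-S)`. -/
theorem psi_isomorphism {E : Type*} [NormedAddCommGroup E] [InnerProductSpace ℂ E]
    [FiniteDimensional ℂ E] (S A B : E →ₗ[ℂ] E)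
    (hSsym : S.IsSymmetric) (hSidem : S * S = S)
    (hAanti : ∀ x y : E, ⟪A x, y⟫_ℂ = -⟪x, A y⟫_ℂ)
    (hAB : A * B = 1) (hBA : B * A = 1)
    (h1 : (1 - S) * A * (1 - S) = 0) (h2 : S * B * S = 0) :
    Set.MapsTo ⇑(-((1 - S) * A)) (LinearMap.range S : Set E) (LinearMap.range (1 - S) : Set E) ∧
    Set.MapsTo ⇑(-(S * B)) (LinearMap.range (1 - S) : Set E) (LinearMap.range S : Set E) ∧
    (∀ x ∈ LinearMap.range S, (-(S * B)) ((-((1 - S) * A)) x) = x) ∧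
    (∀ y ∈ LinearMap.range (1 - S), (-((1 - S) * A)) ((-(S * B)) y) = y) :=
  psi_isomorphism_general S A B hSidem hAB hBA h1 h2
end

section
/- Let H be a Hilbert space, P a selfadjoint operator, T = Sγ₀ a boundary operator determined by data such that a*Dom(P_T^k) is characterized by: ψ ∈ H^k and T(P₊^j ψ) = 0 for 0 ≤ j ≤ k-1. Suppose a is an operator satisfying: (a) Ta = a_N T for some boundary operator a_N, and (b) for all i ∈ ℕ there exist operators R_i with T dⁱ(a) = R_i T, where d(a) := [P₊, a]. Then using the identity [P₊^j, a] = Σ_{i=1}^{j} C(j,i) dⁱ(a) P₊^{j-i} (with binomial coefficients C(j,i)), one has T(P₊^j a ψ) = 0 for all 0 ≤ j ≤ k-1 whenever T(P₊^j ψ) = 0 for all 0 ≤ j ≤ k-1; hence a preserves Dom(P_T^k). -/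
/-!
Left multiplication by `P` is the sum of the commuting operators `d = [P, ·]` and right
multiplication by `P`, so the binomial theorem gives `Pʲ a = Σ C(j,i) dⁱ(a) P^(j-i)`. Applying
`T` turns each term into `C(j,i) Rᵢ (T (P^(j-i) ψ))`, which vanishes.
-/

open Finset

theorem pow_mul_eq_sum_iterate_commutator {A : Type*} [Ring A] (p a : A) (n : ℕ) :
    p ^ n * a = ∑ ij ∈ antidiagonal n,
      n.choose ij.1 • ((fun x => p * x - x * p)^[ij.1] a * p ^ ij.2) := by
  set L := LinearMap.mulLeft ℤ p
  set R := LinearMap.mulRight ℤ p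
  have h_comm : Commute (L - R) R :=
    (LinearMap.commute_mulLeft_right p p).sub_left (Commute.refl R)
  have h_ad : ⇑(L - R) = fun x => p * x - x * p := rfl
  calc p ^ n * a = (L ^ n) a := by rw [LinearMap.pow_mulLeft]; rfl
    _ = ((L - R + R) ^ n) a := by rw [sub_add_cancel]
    _ = _ := by
      rw [h_comm.add_pow', LinearMap.sum_apply]
      refine sum_congr rfl fun ij _ => ?_
      rw [LinearMap.smul_apply, (h_comm.pow_pow _ _).eq, Module.End.mul_apply,
        LinearMap.pow_mulRight, Module.End.pow_apply, h_ad]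
      rfl

theorem trace_pow_apply_eq_zero {R V W : Type*} [Semiring R] [AddCommGroup V] [Module R V]
    [AddCommMonoid W] [Module R W] (P a : Module.End R V) (T : V →ₗ[R] W)
    (hR : ∀ i : ℕ, ∃ Rᵢ : Module.End R W,
      T ∘ₗ ((fun x : Module.End R V => P * x - x * P)^[i] a) = Rᵢ ∘ₗ T)
    {ψ : V} {j : ℕ} (hψ : ∀ m ≤ j, T ((P ^ m) ψ) = 0) :
    T ((P ^ j) (a ψ)) = 0 := by
  rw [← Module.End.mul_apply, pow_mul_eq_sum_iterate_commutator, LinearMap.sum_apply, map_sum]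
  refine sum_eq_zero fun ij hij => ?_
  obtain ⟨Rᵢ, hRᵢ⟩ := hR ij.1
  rw [LinearMap.smul_apply, map_nsmul, Module.End.mul_apply, ← LinearMap.comp_apply, hRᵢ,
    LinearMap.comp_apply, hψ ij.2 (HasAntidiagonal.antidiagonal.snd_le hij), map_zero, smul_zero]

theorem trace_vanishing_preserved_general {V W : Type*} [AddCommGroup V] [Module ℂ V]
    [AddCommGroup W] [Module ℂ W]
    (P a : Module.End ℂ V) (T : V →ₗ[ℂ] W)
    (hR : ∀ i : ℕ, ∃ R : Module.End ℂ W,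
      T ∘ₗ ((fun x : Module.End ℂ V => P * x - x * P)^[i] a) = R ∘ₗ T) :
    ∀ (k : ℕ) (ψ : V), (∀ j < k, T ((P ^ j) ψ) = 0) → ∀ j < k, T ((P ^ j) (a ψ)) = 0 :=
  fun _ _ hψ _ hj => trace_pow_apply_eq_zero P a T hR fun m hm => hψ m (hm.trans_lt hj)

/-- Abstract version of Lemma 4.5(i): if `T a = a_N T` and each iterated commutator
`dⁱ(a) = [P,·]ⁱ(a)` satisfies `T dⁱ(a) = Rᵢ T`, then, using the expansion
`[Pʲ, a] = Σᵢ C(j,i) dⁱ(a) P^{j-i}`, the vanishing of the traces `T(Pʲψ) = 0` for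
`j < k` implies `T(Pʲ(aψ)) = 0` for `j < k`; hence `a` preserves `Dom P_T^k`. -/
theorem trace_vanishing_preserved {V W : Type*} [AddCommGroup V] [Module ℂ V]
    [AddCommGroup W] [Module ℂ W]
    (P a : Module.End ℂ V) (T : V →ₗ[ℂ] W)
    (haN : ∃ aN : Module.End ℂ W, T ∘ₗ a = aN ∘ₗ T)
    (hR : ∀ i : ℕ, ∃ R : Module.End ℂ W,
      T ∘ₗ ((fun x : Module.End ℂ V => P * x - x * P)^[i] a) = R ∘ₗ T) :
    ∀ (k : ℕ) (ψ : V), (∀ j < k, T ((P ^ j) ψ) = 0) → ∀ j < k, T ((P ^ j) (a ψ)) = 0 :=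
  trace_vanishing_preserved_general P a T hR
end
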